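/- Assume the regularity condition κ(s)·r(s)·√(1−r'(s)²) < 1 − r'(s)² − r(s)·r''(s) for all s. Define the derivative along the vector field V by D_V f(s,φ) = ∂f/∂s(s,φ) − (τ(s) + (r'(s)/√(1−r'(s)²))·κ(s)·sin φ)·∂f/∂φ(s,φ), and set k₁(s,φ) = (κ(s)√(1−r'(s)²)cos φ + r''(s)) / (r(s)κ(s)√(1−r'(s)²)cos φ + r(s)r''(s) − (1−r'(s)²)). Then Rodrigues' equation D_V N(s,φ) + k₁(s,φ)·D_V α(s,φ) = 0 holds for every (s,φ); that is, k₁ is a principal curvature and the integral curves of V are principal curvature lines of α. -/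

import Mathlib

open scoped RealInnerProductSpace

noncomputable def cross3 (u v : EuclideanSpace ℝ (Fin 3)) : EuclideanSpace ℝ (Fin 3) :=
  (WithLp.equiv 2 (Fin 3 → ℝ)).symm
    ![u 1 * v 2 - u 2 * v 1, u 2 * v 0 - u 0 * v 2, u 0 * v 1 - u 1 * v 0]

lemma cross3_apply (u v : EuclideanSpace ℝ (Fin 3)) (i : Fin 3) :
    cross3 u v i = ![u 1 * v 2 - u 2 * v 1, u 2 * v 0 - u 0 * v 2, u 0 * v 1 - u 1 * v 0] i := rfl

lemma cross3_self (u : EuclideanSpace ℝ (Fin 3)) : cross3 u u = 0 := by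
  ext i; fin_cases i <;> simp [cross3_apply] <;> ring

lemma cross3_smul_left (a : ℝ) (u v : EuclideanSpace ℝ (Fin 3)) :
    cross3 (a • u) v = a • cross3 u v := by
  ext i; fin_cases i <;> simp [cross3_apply] <;> ring

lemma cross3_smul_right (a : ℝ) (u v : EuclideanSpace ℝ (Fin 3)) :
    cross3 u (a • v) = a • cross3 u v := by
  ext i; fin_cases i <;> simp [cross3_apply] <;> ring

lemma cross3_add_right (u v w : EuclideanSpace ℝ (Fin 3)) :
    cross3 u (v + w) = cross3 u v + cross3 u w := by
  ext i; fin_cases i <;> simp [cross3_apply] <;> ring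

lemma inner3 (x y : EuclideanSpace ℝ (Fin 3)) :
    ⟪x, y⟫ = x 0 * y 0 + x 1 * y 1 + x 2 * y 2 := by
  simp [PiLp.inner_apply, RCLike.inner_apply, Fin.sum_univ_three]
  ring

lemma cross3_triple (t n : EuclideanSpace ℝ (Fin 3))
    (h1 : t 0 * t 0 + t 1 * t 1 + t 2 * t 2 = 1)
    (h2 : t 0 * n 0 + t 1 * n 1 + t 2 * n 2 = 0) :
    cross3 t (cross3 t n) = -n := by
  ext i
  fin_cases i <;>
    simp only [cross3_apply, Matrix.cons_val_zero, Matrix.cons_val_one, Matrix.head_cons,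
      Matrix.cons_val_two, Matrix.tail_cons, Fin.zero_eta, Fin.mk_one, Fin.reduceFinMk,
      PiLp.neg_apply]
  · linear_combination t 0 * h2 - n 0 * h1
  · linear_combination t 1 * h2 - n 1 * h1
  · linear_combination t 2 * h2 - n 2 * h1

lemma hasDerivAt_euclidean3 {f : ℝ → EuclideanSpace ℝ (Fin 3)} {f' : EuclideanSpace ℝ (Fin 3)} {x : ℝ}
    (h : ∀ i, HasDerivAt (fun u => f u i) (f' i) x) : HasDerivAt f f' x := by
  let e := PiLp.continuousLinearEquiv 2 ℝ (fun _ : Fin 3 => ℝ)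
  have h1 : HasDerivAt (fun u => e (f u)) (e f') x := hasDerivAt_pi.mpr h
  exact (e.symm.toContinuousLinearMap.hasFDerivAt.comp_hasDerivAt x h1)

lemma hasDerivAt_euclidean3' {f : ℝ → EuclideanSpace ℝ (Fin 3)} {f' : EuclideanSpace ℝ (Fin 3)} {x : ℝ}
    (h : HasDerivAt f f' x) (i : Fin 3) : HasDerivAt (fun u => f u i) (f' i) x := by
  let e := PiLp.continuousLinearEquiv 2 ℝ (fun _ : Fin 3 => ℝ)
  have h1 : HasDerivAt (fun u => e (f u)) (e f') x :=
    (e.toContinuousLinearMap.hasFDerivAt.comp_hasDerivAt x h)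
  exact hasDerivAt_pi.mp h1 i

lemma HasDerivAt.cross3' {f g : ℝ → EuclideanSpace ℝ (Fin 3)} {f' g' : EuclideanSpace ℝ (Fin 3)} {x : ℝ}
    (hf : HasDerivAt f f' x) (hg : HasDerivAt g g' x) :
    HasDerivAt (fun u => cross3 (f u) (g u)) (cross3 f' (g x) + cross3 (f x) g') x := by
  have F := hasDerivAt_euclidean3' hf
  have G := hasDerivAt_euclidean3' hg
  apply hasDerivAt_euclidean3
  intro i
  have key : ∀ u, cross3 (f u) (g u) i =
      ![f u 1 * g u 2 - f u 2 * g u 1, f u 2 * g u 0 - f u 0 * g u 2,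
        f u 0 * g u 1 - f u 1 * g u 0] i := fun u => rfl
  have hval : (cross3 f' (g x) + cross3 (f x) g') i =
      ![f' 1 * g x 2 - f' 2 * g x 1, f' 2 * g x 0 - f' 0 * g x 2,
        f' 0 * g x 1 - f' 1 * g x 0] i +
      ![f x 1 * g' 2 - f x 2 * g' 1, f x 2 * g' 0 - f x 0 * g' 2,
        f x 0 * g' 1 - f x 1 * g' 0] i := rfl
  simp only [key, hval]
  fin_cases i <;>
    simp only [Matrix.cons_val_zero, Matrix.cons_val_one, Matrix.head_cons, Fin.mk_one,
      Matrix.cons_val_two, Matrix.tail_cons, Fin.zero_eta, Fin.reduceFinMk]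
  · have h := (((F 1).mul (G 2)).sub ((F 2).mul (G 1)))
    exact h.congr_deriv (by ring)
  · have h := (((F 2).mul (G 0)).sub ((F 0).mul (G 2)))
    exact h.congr_deriv (by ring)
  · have h := (((F 0).mul (G 1)).sub ((F 1).mul (G 0)))
    exact h.congr_deriv (by ring)

set_option maxHeartbeats 2000000

theorem canal_surface_rodrigues_minimal
    (c : ℝ → EuclideanSpace ℝ (Fin 3)) (r κ τ : ℝ → ℝ)
    (t n b : ℝ → EuclideanSpace ℝ (Fin 3))
    (hc : ContDiff ℝ (⊤ : ℕ∞) c) (hr : ContDiff ℝ (⊤ : ℕ∞) r)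
    (harc : ∀ s, ‖deriv c s‖ = 1)
    (hκ : ∀ s, κ s = ‖deriv (deriv c) s‖)
    (hκpos : ∀ s, 0 < κ s)
    (ht : ∀ s, t s = deriv c s)
    (hn : ∀ s, n s = (κ s)⁻¹ • deriv (deriv c) s)
    (hb : ∀ s, b s = cross3 (t s) (n s))
    (hτ : ∀ s, deriv n s = (-κ s) • t s + τ s • b s)
    (hrpos : ∀ s, 0 < r s)
    (hr1 : ∀ s, |deriv r s| < 1)
    (α : ℝ → ℝ → EuclideanSpace ℝ (Fin 3))
    (hα : ∀ s φ, α s φ = c s - (r s * deriv r s) • t s +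
      (r s * Real.sqrt (1 - deriv r s ^ 2)) • (Real.cos φ • n s + Real.sin φ • b s))
    (N : ℝ → ℝ → EuclideanSpace ℝ (Fin 3))
    (hN : ∀ s φ, N s φ = deriv r s • t s -
      Real.sqrt (1 - deriv r s ^ 2) • (Real.cos φ • n s + Real.sin φ • b s))
    (hreg : ∀ s, κ s * r s * Real.sqrt (1 - deriv r s ^ 2) <
      1 - deriv r s ^ 2 - r s * deriv (deriv r) s) :
    ∀ s φ,
      (deriv (fun u => N u φ) s -
        (τ s + deriv r s / Real.sqrt (1 - deriv r s ^ 2) * κ s * Real.sin φ) •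
          deriv (fun v => N s v) φ) +
      ((κ s * Real.sqrt (1 - deriv r s ^ 2) * Real.cos φ + deriv (deriv r) s) /
        (r s * κ s * Real.sqrt (1 - deriv r s ^ 2) * Real.cos φ +
          r s * deriv (deriv r) s - (1 - deriv r s ^ 2))) •
      (deriv (fun u => α u φ) s -
        (τ s + deriv r s / Real.sqrt (1 - deriv r s ^ 2) * κ s * Real.sin φ) •
          deriv (fun v => α s v) φ) = 0 := by
  intro s φ
  have hdiffble : ∀ {g : ℝ → EuclideanSpace ℝ (Fin 3)}, ContDiff ℝ (⊤ : ℕ∞) g → Differentiable ℝ g :=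
    fun hg => hg.differentiable (by simp)
  have hc1 : ContDiff ℝ (⊤ : ℕ∞) (deriv c) := (contDiff_infty_iff_deriv.mp (hc.of_le (by simp))).2
  have hc2 : ContDiff ℝ (⊤ : ℕ∞) (deriv (deriv c)) := (contDiff_infty_iff_deriv.mp hc1).2
  have hrd : ContDiff ℝ (⊤ : ℕ∞) (deriv r) := (contDiff_infty_iff_deriv.mp (hr.of_le (by simp))).2
  set p := deriv r s with hpdef
  set pp := deriv (deriv r) s with hppdef
  set q := Real.sqrt (1 - p ^ 2) with hqdef
  set co := Real.cos φ with hcodef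
  set si := Real.sin φ with hsidef
  have hp1 : p ^ 2 < 1 := by
    have h : |p| < 1 := hr1 s
    nlinarith [sq_abs p, abs_nonneg p]
  have hqpos : 0 < q := Real.sqrt_pos.mpr (by linarith)
  have hq0 : q ≠ 0 := ne_of_gt hqpos
  have hq2 : q ^ 2 = 1 - p ^ 2 := Real.sq_sqrt (by linarith)
  have hsi2 : si ^ 2 = 1 - co ^ 2 := Real.sin_sq φ
  -- scalar derivatives
  have hp : HasDerivAt r p s := ((hr.differentiable (by simp)) s).hasDerivAt
  have hppd : HasDerivAt (deriv r) pp s := ((hrd.differentiable (by simp)) s).hasDerivAt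
  have hqd : HasDerivAt (fun u => Real.sqrt (1 - deriv r u ^ 2)) (-(p * pp) / q) s := by
    have h1 : HasDerivAt (fun u => 1 - deriv r u ^ 2) (0 - 2 * p ^ 1 * pp) s :=
      (hasDerivAt_const s 1).sub (hppd.pow 2)
    have h2 := h1.sqrt (ne_of_gt (by linarith : (0:ℝ) < 1 - p ^ 2))
    convert h2 using 1
    rw [← hqdef]
    field_simp
    ring
  -- Frenet frame derivatives
  have hdd_ne : deriv (deriv c) s ≠ 0 := by
    have h := hκpos s; rw [hκ s] at h; exact norm_pos_iff.mp h
  have hddd : HasDerivAt (deriv c) (deriv (deriv c) s) s :=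
    ((hc1.differentiable (by simp)) s).hasDerivAt
  have hddval : deriv (deriv c) s = κ s • n s := by
    rw [hn s, smul_smul, mul_inv_cancel₀ (ne_of_gt (hκpos s)), one_smul]
  have hct : HasDerivAt c (t s) s := by
    have h := ((hc.differentiable (by simp)) s).hasDerivAt
    rwa [← ht s] at h
  have htd : HasDerivAt t (κ s • n s) s := by
    have hteq : t = deriv c := funext ht
    rw [hteq, ← hddval]; exact hddd
  have hκdiff : DifferentiableAt ℝ κ s := by
    have hκeq : κ = fun u => ‖deriv (deriv c) u‖ := funext hκ
    rw [hκeq]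
    exact ((hc2.differentiable (by simp)) s).norm ℝ hdd_ne
  have hndiff : DifferentiableAt ℝ n s := by
    have hneq : n = fun u => (κ u)⁻¹ • deriv (deriv c) u := funext hn
    rw [hneq]
    exact (hκdiff.inv (ne_of_gt (hκpos s))).smul ((hc2.differentiable (by simp)) s)
  have hnd : HasDerivAt n ((-κ s) • t s + τ s • b s) s := by
    have h := hndiff.hasDerivAt; rwa [hτ s] at h
  -- orthogonality facts
  have htt1 : ⟪t s, t s⟫ = 1 := by
    rw [real_inner_self_eq_norm_sq, ht s, harc s]; norm_num
  have htn0 : ⟪t s, n s⟫ = 0 := by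
    have hconst : (fun u => ⟪deriv c u, deriv c u⟫) = fun _ => (1:ℝ) :=
      funext fun u => by rw [real_inner_self_eq_norm_sq, harc u]; norm_num
    have hD := hddd.inner ℝ hddd
    have h0 : HasDerivAt (fun u => ⟪deriv c u, deriv c u⟫) 0 s := by
      rw [hconst]; exact hasDerivAt_const s 1
    have huniq := hD.unique h0
    have hz : ⟪deriv (deriv c) s, deriv c s⟫ = 0 := by
      rw [real_inner_comm]
      linarith [huniq, real_inner_comm (deriv c s) (deriv (deriv c) s)]
    rw [ht s, hn s, real_inner_smul_right, real_inner_comm, hz, mul_zero]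
  have httc : t s 0 * t s 0 + t s 1 * t s 1 + t s 2 * t s 2 = 1 := by
    rw [← inner3]; exact htt1
  have htnc : t s 0 * n s 0 + t s 1 * n s 1 + t s 2 * n s 2 = 0 := by
    rw [← inner3]; exact htn0
  have hbd : HasDerivAt b ((-τ s) • n s) s := by
    have hbeq : b = fun u => cross3 (t u) (n u) := funext hb
    have h := htd.cross3' hnd
    rw [hbeq]
    convert h using 1
    rw [cross3_smul_left, cross3_self, smul_zero, zero_add, cross3_add_right,
      cross3_smul_right, cross3_smul_right, cross3_self, smul_zero, zero_add, hb s,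
      cross3_triple (t s) (n s) httc htnc, smul_neg, neg_smul]
  -- phi-direction derivatives
  have hinφ : HasDerivAt (fun v => Real.cos v • n s + Real.sin v • b s) ((-si) • n s + co • b s) φ :=
    ((Real.hasDerivAt_cos φ).smul_const (n s)).add ((Real.hasDerivAt_sin φ).smul_const (b s))
  have hNφfun : (fun v => N s v) =
      fun v => p • t s - q • (Real.cos v • n s + Real.sin v • b s) :=
    funext fun v => hN s v
  have dNφ : deriv (fun v => N s v) φ = 0 - q • ((-si) • n s + co • b s) := by
    rw [hNφfun]
    exact ((hasDerivAt_const φ (p • t s)).sub (hinφ.const_smul q)).deriv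
  have hαφfun : (fun v => α s v) = fun v => c s - (r s * p) • t s +
      (r s * q) • (Real.cos v • n s + Real.sin v • b s) :=
    funext fun v => hα s v
  have dαφ : deriv (fun v => α s v) φ = 0 + (r s * q) • ((-si) • n s + co • b s) := by
    rw [hαφfun]
    exact ((hasDerivAt_const φ (c s - (r s * p) • t s)).add (hinφ.const_smul (r s * q))).deriv
  -- s-direction derivatives
  have hinN : HasDerivAt (fun u => co • n u + si • b u)
      (co • ((-κ s) • t s + τ s • b s) + si • ((-τ s) • n s)) s :=
    (hnd.const_smul co).add (hbd.const_smul si)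
  have hNsfun : (fun u => N u φ) = fun u => deriv r u • t u -
      Real.sqrt (1 - deriv r u ^ 2) • (co • n u + si • b u) :=
    funext fun u => hN u φ
  have dNs : deriv (fun u => N u φ) s =
      p • (κ s • n s) + pp • t s -
        (q • (co • ((-κ s) • t s + τ s • b s) + si • ((-τ s) • n s)) +
          (-(p * pp) / q) • (co • n s + si • b s)) := by
    rw [hNsfun]
    exact ((hppd.smul htd).sub (hqd.smul hinN)).deriv
  have hαsfun : (fun u => α u φ) = fun u => c u - (r u * deriv r u) • t u +
      (r u * Real.sqrt (1 - deriv r u ^ 2)) • (co • n u + si • b u) :=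
    funext fun u => hα u φ
  have hrder : HasDerivAt (fun u => r u * deriv r u) (p * p + r s * pp) s := hp.mul hppd
  have hrq : HasDerivAt (fun u => r u * Real.sqrt (1 - deriv r u ^ 2))
      (p * q + r s * (-(p * pp) / q)) s := hp.mul hqd
  have dαs : deriv (fun u => α u φ) s =
      t s - ((r s * p) • (κ s • n s) + (p * p + r s * pp) • t s) +
        ((r s * q) • (co • ((-κ s) • t s + τ s • b s) + si • ((-τ s) • n s)) +
          (p * q + r s * (-(p * pp) / q)) • (co • n s + si • b s)) := by
    rw [hαsfun]
    exact ((hct.sub (hrder.smul htd)).add (hrq.smul hinN)).deriv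
  rw [dNs, dNφ, dαs, dαφ]
  have hEN : (p • (κ s • n s) + pp • t s -
        (q • (co • ((-κ s) • t s + τ s • b s) + si • ((-τ s) • n s)) +
          (-(p * pp) / q) • (co • n s + si • b s))) -
      (τ s + p / q * κ s * si) • (0 - q • ((-si) • n s + co • b s)) =
      ((pp + q * κ s * co) / q) • (q • t s + (p * co) • n s + (p * si) • b s) := by
    match_scalars
    · field_simp
      linear_combination (-(p * κ s * q)) * hsi2
    · field_simp
      ring
    · field_simp
      ring
  have hEα : (t s - ((r s * p) • (κ s • n s) + (p * p + r s * pp) • t s) +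
        ((r s * q) • (co • ((-κ s) • t s + τ s • b s) + si • ((-τ s) • n s)) +
          (p * q + r s * (-(p * pp) / q)) • (co • n s + si • b s))) -
      (τ s + p / q * κ s * si) • (0 + (r s * q) • ((-si) • n s + co • b s)) =
      ((1 - p ^ 2 - r s * pp - r s * q * κ s * co) / q) •
        (q • t s + (p * co) • n s + (p * si) • b s) := by
    match_scalars
    · field_simp
      ring
    · field_simp
      linear_combination (p * co) * hq2 + (r s * p * κ s * q) * hsi2
    · field_simp
      linear_combination (p * si) * hq2
  rw [hEN, hEα, smul_smul, ← add_smul]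
  have hD0 : r s * κ s * q * co + r s * pp - (1 - p ^ 2) ≠ 0 := by
    have hco : co ≤ 1 := Real.cos_le_one φ
    have hreg' := hreg s
    have hpos : 0 < r s * κ s * q := mul_pos (mul_pos (hrpos s) (hκpos s)) hqpos
    have h1 : r s * κ s * q * co ≤ r s * κ s * q := by nlinarith
    apply ne_of_lt
    nlinarith
  have hcoef : (pp + q * κ s * co) / q +
      (κ s * q * co + pp) /
        (r s * κ s * q * co + r s * pp - (1 - p ^ 2)) *
        ((1 - p ^ 2 - r s * pp - r s * q * κ s * co) / q) = 0 := by
    rw [div_mul_div_comm, div_add_div _ _ hq0 (mul_ne_zero hD0 hq0), div_eq_zero_iff]; left; ring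
  rw [hcoef, zero_smul]
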